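/- arXiv:1305.2665 — 7 statements merged into one kernel-verified Lean document; each statement's English description precedes it below -/
import Mathlib

section
/- Let p, s, r be integers with p ≥ 2, 1 ≤ s ≤ p−1 and r ≥ 1, and let u be a complex number with |u| < 1. Then Σ_{n=0}^∞ (u^{((r+2n)p−s)²} − u^{((r+2n)p+s)²}) = Σ_{n=0}^∞ (u^{((r−2n−1)p−(p−s))²} − u^{((r−2n−2)p−s)²}), both series converging absolutely. -/
/-!
Put `ψ m = u ^ ((m p - s)²)`. Since `(-m p - s)² = (m p + s)²`, the `n`-th term of the left
series is `ψ m - ψ (-m)` at `m = r + 2n`, and that of the right series is the same expression at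
`m = 2n + 2 - r`. The right series therefore runs over `m = 2 - r, 4 - r, …`: its first `r - 1`
terms sit symmetrically around `0` and cancel against each other, and the remaining ones are
exactly the left series. Absolute convergence comes from the exponents growing at least linearly
in `n`.
-/

open Finset

section Antisymmetrization

variable {α : Type*} [AddCommGroup α] (ψ : ℤ → α) (k : ℕ)

theorem sum_range_sub_comp_neg_eq_zero :
    ∑ j ∈ range k, (ψ (2 * j + 1 - k) - ψ (-(2 * j + 1 - k))) = 0 := by
  rw [sum_sub_distrib, sub_eq_zero, ← sum_range_reflect]
  refine sum_congr rfl fun j hj => ?_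
  have hjk : j < k := mem_range.mp hj
  congr 1
  rw [Nat.sub_sub, Nat.cast_sub (by omega : 1 + j ≤ k)]
  push_cast
  ring

theorem sub_comp_neg_nat_add (n : ℕ) :
    ψ (2 * ((n + k : ℕ) : ℤ) + 1 - k) - ψ (-(2 * ((n + k : ℕ) : ℤ) + 1 - k))
      = ψ (2 * n + 1 + k) - ψ (-(2 * n + 1 + k)) := by
  push_cast
  ring_nf

theorem summable_norm_sub_comp_neg_iff_nat_add {β : Type*} [SeminormedAddCommGroup β]
    (φ : ℤ → β) :
    Summable (fun n : ℕ => ‖φ (2 * n + 1 - k) - φ (-(2 * n + 1 - k))‖) ↔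
      Summable (fun n : ℕ => ‖φ (2 * n + 1 + k) - φ (-(2 * n + 1 + k))‖) := by
  simp only [← sub_comp_neg_nat_add φ k]
  exact (summable_nat_add_iff k).symm

theorem tsum_sub_comp_neg_eq_tsum_nat_add [TopologicalSpace α] [IsTopologicalAddGroup α]
    [T2Space α] :
    ∑' n : ℕ, (ψ (2 * n + 1 - k) - ψ (-(2 * n + 1 - k)))
      = ∑' n : ℕ, (ψ (2 * n + 1 + k) - ψ (-(2 * n + 1 + k))) := by
  by_cases h : Summable (fun n : ℕ => ψ (2 * n + 1 - k) - ψ (-(2 * n + 1 - k)))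
  · rw [← h.sum_add_tsum_nat_add k, sum_range_sub_comp_neg_eq_zero, zero_add]
    simp only [sub_comp_neg_nat_add]
  · rw [tsum_eq_zero_of_not_summable h, tsum_eq_zero_of_not_summable]
    simp only [← sub_comp_neg_nat_add ψ k]
    exact mt (summable_nat_add_iff
      (f := fun n : ℕ => ψ (2 * n + 1 - k) - ψ (-(2 * n + 1 - k))) k).mp h

end Antisymmetrization

theorem summable_norm_zpow_of_le {𝕜 : Type*} [NormedDivisionRing 𝕜] {u : 𝕜} (hu : ‖u‖ < 1)
    {e : ℕ → ℤ} (he : ∀ n : ℕ, (n : ℤ) ≤ e n) : Summable fun n => ‖u ^ e n‖ := by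
  refine (summable_geometric_of_lt_one (norm_nonneg u) hu).of_nonneg_of_le (fun _ => norm_nonneg _)
    fun n => ?_
  have hn := he n
  lift e n to ℕ using (Int.natCast_nonneg n).trans hn with m
  rw [zpow_natCast, norm_pow]
  exact pow_le_pow_of_le_one (norm_nonneg u) hu.le (by exact_mod_cast hn)

theorem stmt_1_general (p s r : ℤ) (hs1 : 1 ≤ s) (hs2 : s ≤ p - 1) (hr : 1 ≤ r)
    (u : ℂ) (hu : ‖u‖ < 1) :
    Summable (fun n : ℕ => ‖u ^ (((r + 2 * (n : ℤ)) * p - s) ^ 2)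
        - u ^ (((r + 2 * (n : ℤ)) * p + s) ^ 2)‖) ∧
    Summable (fun n : ℕ => ‖u ^ (((r - 2 * (n : ℤ) - 1) * p - (p - s)) ^ 2)
        - u ^ (((r - 2 * (n : ℤ) - 2) * p - s) ^ 2)‖) ∧
    (∑' n : ℕ, (u ^ (((r + 2 * (n : ℤ)) * p - s) ^ 2)
        - u ^ (((r + 2 * (n : ℤ)) * p + s) ^ 2)))
      = ∑' n : ℕ, (u ^ (((r - 2 * (n : ℤ) - 1) * p - (p - s)) ^ 2)
        - u ^ (((r - 2 * (n : ℤ) - 2) * p - s) ^ 2)) := by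
  obtain ⟨k, rfl⟩ : ∃ k : ℕ, r = k + 1 := ⟨(r - 1).toNat, by omega⟩
  set ψ : ℤ → ℂ := fun m => u ^ ((m * p - s) ^ 2)
  have left_term (n : ℕ) : u ^ (((k + 1 + 2 * (n : ℤ)) * p - s) ^ 2)
      - u ^ (((k + 1 + 2 * (n : ℤ)) * p + s) ^ 2)
      = ψ (2 * n + 1 + k) - ψ (-(2 * n + 1 + k)) := by
    congr 2 <;> ring
  have right_term (n : ℕ) : u ^ (((k + 1 - 2 * (n : ℤ) - 1) * p - (p - s)) ^ 2)
      - u ^ (((k + 1 - 2 * (n : ℤ) - 2) * p - s) ^ 2)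
      = ψ (2 * n + 1 - k) - ψ (-(2 * n + 1 - k)) := by
    congr 2 <;> ring
  simp only [left_term, right_term]
  have hψ (m : ℕ → ℤ) (hm : ∀ n : ℕ, (n : ℤ) ≤ |m n * p - s|) : Summable fun n => ‖ψ (m n)‖ :=
    summable_norm_zpow_of_le hu fun n =>
      (hm n).trans (Int.natCast_natAbs (m n * p - s) ▸ Int.natAbs_le_self_sq _)
  have hleft : Summable fun n : ℕ => ‖ψ (2 * n + 1 + k) - ψ (-(2 * n + 1 + k))‖ := by
    refine ((hψ _ fun n => ?_).add (hψ _ fun n => ?_)).of_nonneg_of_le (fun _ => norm_nonneg _)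
      fun n => norm_sub_le _ _
    · exact le_abs.mpr (.inl (by nlinarith))
    · exact le_abs.mpr (.inr (by nlinarith))
  exact ⟨hleft, (summable_norm_sub_comp_neg_iff_nat_add k ψ).mpr hleft,
    (tsum_sub_comp_neg_eq_tsum_nat_add ψ k).symm⟩

/-- The Felder-complex decomposition of the singlet character:
`Σ_{n≥0} (u^{((r+2n)p−s)²} − u^{((r+2n)p+s)²})
  = Σ_{n≥0} (u^{((r−2n−1)p−(p−s))²} − u^{((r−2n−2)p−s)²})`,
both series converging absolutely, for `p ≥ 2`, `1 ≤ s ≤ p−1`, `r ≥ 1` and `|u| < 1`. -/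
theorem stmt_1 (p s r : ℤ) (hp : 2 ≤ p) (hs1 : 1 ≤ s) (hs2 : s ≤ p - 1) (hr : 1 ≤ r)
    (u : ℂ) (hu : ‖u‖ < 1) :
    Summable (fun n : ℕ => ‖u ^ (((r + 2 * (n : ℤ)) * p - s) ^ 2)
        - u ^ (((r + 2 * (n : ℤ)) * p + s) ^ 2)‖) ∧
    Summable (fun n : ℕ => ‖u ^ (((r - 2 * (n : ℤ) - 1) * p - (p - s)) ^ 2)
        - u ^ (((r - 2 * (n : ℤ) - 2) * p - s) ^ 2)‖) ∧
    (∑' n : ℕ, (u ^ (((r + 2 * (n : ℤ)) * p - s) ^ 2)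
        - u ^ (((r + 2 * (n : ℤ)) * p + s) ^ 2)))
      = ∑' n : ℕ, (u ^ (((r - 2 * (n : ℤ) - 1) * p - (p - s)) ^ 2)
        - u ^ (((r - 2 * (n : ℤ) - 2) * p - s) ^ 2)) :=
  stmt_1_general p s r hs1 hs2 hr u hu
end

section
/- Let p and s be integers with p ≥ 2 and 1 ≤ s ≤ p−1, let r ∈ {1,2}, and let u be a complex number with |u| < 1. Then Σ_{n∈ℤ} u^{((r+2n)p−s)²} = Σ_{n=0}^∞ (2n+r)(u^{((2n+r)p−s)²} − u^{((2n+r)p+s)²}) + Σ_{n=0}^∞ (2n+3−r)(u^{((2n+3−r)p−(p−s))²} − u^{((2n+3−r)p+(p−s))²}), all series converging absolutely. -/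
/-!
Write `f k = u ^ ((k * p - s) ^ 2)`. For `r = 1` list the lattice terms as `F n = f (2n+1)` and
`G n = f (-(2n+1))` and interleave them into `c = (F 0, G 0, F 1, G 1, …)`. Abel summation
`∑ (m+1) (c m - c (m+1)) = ∑ c m`, valid because the exponents grow at least linearly in `m`,
splits by the parity of `m` into exactly the two triplet characters `W_{1,s}` and `W_{2,p-s}`.
The case `r = 2` is the case `r = 1` with `s` replaced by `p - s`, after reflecting the lattice
sum by `n ↦ -1 - n`.
-/

open Filter Topology Finset

section Interleave

variable {E : Type*}

def interleave (F G : ℕ → E) (m : ℕ) : E :=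
  if Even m then F (m / 2) else G (m / 2)

variable {F G : ℕ → E}

@[simp]
theorem interleave_two_mul (n : ℕ) : interleave F G (2 * n) = F n := by
  simp [interleave]

@[simp]
theorem interleave_two_mul_add_one (n : ℕ) : interleave F G (2 * n + 1) = G n := by
  simp [interleave, Nat.mul_add_div]

@[simp]
theorem interleave_two_mul_add_two (n : ℕ) : interleave F G (2 * n + 2) = F (n + 1) := by
  rw [← mul_add_one, interleave_two_mul]

end Interleave

section Abel

variable {E : Type*} [NormedAddCommGroup E]

theorem summable_norm_of_summable_succ_mul_norm {c : ℕ → E}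
    (hc : Summable fun n : ℕ => ((n : ℝ) + 1) * ‖c n‖) : Summable fun n => ‖c n‖ :=
  hc.of_nonneg_of_le (fun _ => norm_nonneg _) fun n =>
    le_mul_of_one_le_left (norm_nonneg _) (by linarith [n.cast_nonneg (α := ℝ)])

theorem summable_norm_succ_nsmul_sub_succ {c : ℕ → E}
    (hc : Summable fun n : ℕ => ((n : ℝ) + 1) * ‖c n‖) :
    Summable fun n => ‖(n + 1) • (c n - c (n + 1))‖ := by
  have hshift : Summable fun n : ℕ => ((n : ℝ) + 2) * ‖c (n + 1)‖ := by
    refine ((summable_nat_add_iff 1).mpr hc).congr fun n => ?_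
    push_cast
    ring
  refine (hc.add hshift).of_nonneg_of_le (fun _ => norm_nonneg _) fun n => ?_
  calc ‖(n + 1) • (c n - c (n + 1))‖ ≤ ((n : ℝ) + 1) * (‖c n‖ + ‖c (n + 1)‖) := by
        refine norm_nsmul_le.trans ?_
        push_cast
        gcongr
        exact norm_sub_le _ _
    _ ≤ ((n : ℝ) + 1) * ‖c n‖ + ((n : ℝ) + 2) * ‖c (n + 1)‖ := by
        nlinarith [norm_nonneg (c (n + 1))]

/-- The partial sums differ from those of `c` by `N • c N`, which tends to zero. -/
theorem hasSum_succ_nsmul_sub_succ [CompleteSpace E] {c : ℕ → E}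
    (hc : Summable fun n : ℕ => ((n : ℝ) + 1) * ‖c n‖) :
    HasSum (fun n => (n + 1) • (c n - c (n + 1))) (∑' n, c n) := by
  refine ((summable_norm_succ_nsmul_sub_succ hc).of_norm).hasSum_iff_tendsto_nat.mpr ?_
  have hpartial : ∀ N : ℕ, ∑ n ∈ range N, (n + 1) • (c n - c (n + 1))
      = ∑ n ∈ range N, c n - N • c N := by
    intro N
    induction N with
    | zero => simp
    | succ N ih =>
      rw [sum_range_succ, ih, sum_range_succ, smul_sub, succ_nsmul, succ_nsmul]
      abel
  have hlim : Tendsto (fun N : ℕ => N • c N) atTop (𝓝 0) := by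
    refine squeeze_zero_norm (fun N => norm_nsmul_le.trans ?_) hc.tendsto_atTop_zero
    gcongr
    linarith
  simpa only [hpartial, sub_zero] using
    ((summable_norm_of_summable_succ_mul_norm hc).of_norm.hasSum.tendsto_sum_nat).sub hlim

variable {F G : ℕ → E}

theorem summable_succ_mul_norm_interleave
    (hF : Summable fun n : ℕ => ((n : ℝ) + 1) * ‖F n‖)
    (hG : Summable fun n : ℕ => ((n : ℝ) + 1) * ‖G n‖) :
    Summable fun m : ℕ => ((m : ℝ) + 1) * ‖interleave F G m‖ := by
  apply Summable.even_add_odd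
  · refine (hF.mul_left 2).of_nonneg_of_le (fun _ => by positivity) fun n => ?_
    simp only [interleave_two_mul]
    push_cast
    nlinarith [norm_nonneg (F n)]
  · refine (hG.mul_left 2).congr fun n => ?_
    simp only [interleave_two_mul_add_one]
    push_cast
    ring

theorem summable_norm_odd_nsmul_sub
    (hF : Summable fun n : ℕ => ((n : ℝ) + 1) * ‖F n‖)
    (hG : Summable fun n : ℕ => ((n : ℝ) + 1) * ‖G n‖) :
    Summable fun n => ‖(2 * n + 1) • (F n - G n)‖ := by
  simpa [Function.comp_def] using (summable_norm_succ_nsmul_sub_succ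
    (summable_succ_mul_norm_interleave hF hG)).comp_injective (mul_right_injective₀ two_ne_zero)

theorem summable_norm_even_nsmul_sub
    (hF : Summable fun n : ℕ => ((n : ℝ) + 1) * ‖F n‖)
    (hG : Summable fun n : ℕ => ((n : ℝ) + 1) * ‖G n‖) :
    Summable fun n => ‖(2 * n + 2) • (G n - F (n + 1))‖ := by
  simpa [Function.comp_def, add_assoc] using (summable_norm_succ_nsmul_sub_succ
    (summable_succ_mul_norm_interleave hF hG)).comp_injective
      ((add_left_injective 1).comp (mul_right_injective₀ two_ne_zero))

theorem tsum_add_tsum_eq_tsum_nsmul_sub_add_tsum_nsmul_sub [CompleteSpace E]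
    (hF : Summable fun n : ℕ => ((n : ℝ) + 1) * ‖F n‖)
    (hG : Summable fun n : ℕ => ((n : ℝ) + 1) * ‖G n‖) :
    ∑' n, F n + ∑' n, G n
      = ∑' n, (2 * n + 1) • (F n - G n) + ∑' n, (2 * n + 2) • (G n - F (n + 1)) := by
  have hc := summable_succ_mul_norm_interleave hF hG
  have hd := summable_norm_succ_nsmul_sub_succ hc
  calc ∑' n, F n + ∑' n, G n
      = ∑' k, interleave F G (2 * k) + ∑' k, interleave F G (2 * k + 1) := by
        simp only [interleave_two_mul, interleave_two_mul_add_one]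
    _ = ∑' m, interleave F G m := by
        refine tsum_even_add_odd ?_ ?_ <;>
          simp only [interleave_two_mul, interleave_two_mul_add_one]
        exacts [(summable_norm_of_summable_succ_mul_norm hF).of_norm,
          (summable_norm_of_summable_succ_mul_norm hG).of_norm]
    _ = ∑' m, (m + 1) • (interleave F G m - interleave F G (m + 1)) :=
        (hasSum_succ_nsmul_sub_succ hc).tsum_eq.symm
    _ = ∑' k, (2 * k + 1) • (interleave F G (2 * k) - interleave F G (2 * k + 1))
          + ∑' k, (2 * k + 1 + 1) •
              (interleave F G (2 * k + 1) - interleave F G (2 * k + 1 + 1)) :=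
        (tsum_even_add_odd (f := fun m => (m + 1) • (interleave F G m - interleave F G (m + 1)))
          (hd.of_norm.comp_injective (mul_right_injective₀ two_ne_zero))
          (hd.of_norm.comp_injective ((add_left_injective 1).comp
            (mul_right_injective₀ two_ne_zero)))).symm
    _ = _ := by
        simp only [interleave_two_mul, interleave_two_mul_add_one, add_assoc,
          interleave_two_mul_add_two]

end Abel

theorem summable_succ_mul_norm_zpow {𝕜 : Type*} [NormedDivisionRing 𝕜] {u : 𝕜}
    (hu : ‖u‖ < 1) {e : ℕ → ℤ} (he : ∀ n : ℕ, (n : ℤ) ≤ e n) :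
    Summable fun n : ℕ => ((n : ℝ) + 1) * ‖u ^ e n‖ := by
  have hgeom : Summable fun n : ℕ => ((n : ℝ) + 1) * ‖u‖ ^ n := by
    simpa [add_mul] using (summable_pow_mul_geometric_of_norm_lt_one 1 (by simpa using hu)).add
      (summable_geometric_of_lt_one (norm_nonneg u) hu)
  refine hgeom.of_nonneg_of_le (fun _ => by positivity) fun n => ?_
  gcongr
  obtain ⟨k, hk⟩ := Int.eq_ofNat_of_zero_le (n.cast_nonneg.trans (he n))
  have hnk : n ≤ k := by exact_mod_cast hk ▸ he n
  rw [hk, zpow_natCast, norm_pow]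
  exact pow_le_pow_of_le_one (norm_nonneg u) hu.le hnk

namespace TripletCharacter

noncomputable section

/-! `latticeTerm p r s u` and `tripletTerm p r s u` are the summands of `chV(p,r,s)(u)` and
`chW(p,r,s)(u)`. -/

def latticeTerm (p r s : ℤ) (u : ℂ) (n : ℤ) : ℂ :=
  u ^ (((r + 2 * n) * p - s) ^ 2)

def tripletTerm (p r s : ℤ) (u : ℂ) (n : ℕ) : ℂ :=
  (2 * (n : ℂ) + (r : ℂ)) *
    (u ^ (((2 * (n : ℤ) + r) * p - s) ^ 2) - u ^ (((2 * (n : ℤ) + r) * p + s) ^ 2))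

def CharDecomposition (p r s : ℤ) (u : ℂ) : Prop :=
  Summable (fun n => ‖latticeTerm p r s u n‖) ∧
  Summable (fun n => ‖tripletTerm p r s u n‖) ∧
  Summable (fun n => ‖tripletTerm p (3 - r) (p - s) u n‖) ∧
  ∑' n, latticeTerm p r s u n
    = ∑' n, tripletTerm p r s u n + ∑' n, tripletTerm p (3 - r) (p - s) u n

theorem tripletTerm_three_sub (p r s : ℤ) (u : ℂ) (n : ℕ) :
    tripletTerm p (3 - r) (p - s) u n = (2 * (n : ℂ) + 3 - (r : ℂ)) *
      (u ^ (((2 * (n : ℤ) + 3 - r) * p - (p - s)) ^ 2)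
        - u ^ (((2 * (n : ℤ) + 3 - r) * p + (p - s)) ^ 2)) := by
  rw [tripletTerm]
  push_cast
  ring_nf

theorem charDecomposition_one {p s : ℤ} {u : ℂ} (hu : ‖u‖ < 1) (hp : 0 < p) (hs : 0 ≤ s)
    (hsp : s ≤ p) : CharDecomposition p 1 s u := by
  let F (n : ℕ) : ℂ := latticeTerm p 1 s u n
  let G (n : ℕ) : ℂ := latticeTerm p 1 s u (-(n + 1))
  have hF : Summable fun n : ℕ => ((n : ℝ) + 1) * ‖F n‖ :=
    summable_succ_mul_norm_zpow (e := fun n : ℕ => ((1 + 2 * (n : ℤ)) * p - s) ^ 2) hu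
      fun n => by nlinarith [Int.le_self_sq ((1 + 2 * (n : ℤ)) * p - s)]
  have hG : Summable fun n : ℕ => ((n : ℝ) + 1) * ‖G n‖ :=
    summable_succ_mul_norm_zpow (e := fun n : ℕ => ((1 + 2 * -((n : ℤ) + 1)) * p - s) ^ 2) hu
      fun n => by
        rw [show ((1 + 2 * -((n : ℤ) + 1)) * p - s) ^ 2 = ((1 + 2 * (n : ℤ)) * p + s) ^ 2 by
          ring]
        nlinarith [Int.le_self_sq ((1 + 2 * (n : ℤ)) * p + s)]
  have hW₁ (n : ℕ) : tripletTerm p 1 s u n = (2 * n + 1) • (F n - G n) := by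
    simp only [F, G, tripletTerm, latticeTerm, nsmul_eq_mul]
    push_cast
    ring_nf
  -- `(2n+2)p ∓ (p-s)` is `(2n+1)p + s` resp. `(2n+3)p - s`, so `W_{2,p-s}` pairs `G n`
  -- with `F (n+1)`.
  have hW₂ (n : ℕ) : tripletTerm p (3 - 1) (p - s) u n = (2 * n + 2) • (G n - F (n + 1)) := by
    simp only [F, G, tripletTerm, latticeTerm, nsmul_eq_mul]
    push_cast
    ring_nf
  have hFs := summable_norm_of_summable_succ_mul_norm hF
  have hGs := summable_norm_of_summable_succ_mul_norm hG
  refine ⟨Summable.of_nat_of_neg_add_one (f := fun n => ‖latticeTerm p 1 s u n‖) hFs hGs,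
    ?_, ?_, ?_⟩
  · simpa only [hW₁] using summable_norm_odd_nsmul_sub hF hG
  · simpa only [hW₂] using summable_norm_even_nsmul_sub hF hG
  · rw [tsum_of_nat_of_neg_add_one hFs.of_norm hGs.of_norm]
    simpa only [hW₁, hW₂] using tsum_add_tsum_eq_tsum_nsmul_sub_add_tsum_nsmul_sub hF hG

theorem CharDecomposition.two_of_one {p s : ℤ} {u : ℂ} (h : CharDecomposition p 1 (p - s) u) :
    CharDecomposition p 2 s u := by
  obtain ⟨hV, hW₁, hW₂, hsum⟩ := h
  have hrefl (n : ℤ) :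
      latticeTerm p 1 (p - s) u (Equiv.subLeft (-1) n) = latticeTerm p 2 s u n := by
    simp only [Equiv.subLeft_apply, latticeTerm]
    ring_nf
  rw [show (3 : ℤ) - 1 = 2 by norm_num, sub_sub_cancel] at hW₂ hsum
  refine ⟨?_, hW₂, by simpa using hW₁, ?_⟩
  · simpa only [Function.comp_def, hrefl] using (Equiv.subLeft (-1)).summable_iff.mpr hV
  · rw [show (3 : ℤ) - 2 = 1 by norm_num, add_comm, ← hsum,
      ← (Equiv.subLeft (-1)).tsum_eq (latticeTerm p 1 (p - s) u)]
    exact (tsum_congr hrefl).symm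

end

end TripletCharacter

open TripletCharacter in
/-- Character form of the short exact sequence `0 → W_{r,s} → V_{[α_{r,s}]} → W_{3−r,p−s} → 0`:
`Σ_{n∈ℤ} u^{((r+2n)p−s)²}
   = Σ_{n≥0} (2n+r)(u^{((2n+r)p−s)²} − u^{((2n+r)p+s)²})
   + Σ_{n≥0} (2n+3−r)(u^{((2n+3−r)p−(p−s))²} − u^{((2n+3−r)p+(p−s))²})`,
all series converging absolutely, for `p ≥ 2`, `1 ≤ s ≤ p−1`, `r ∈ {1,2}` and `|u| < 1`. -/
theorem stmt_4 (p s r : ℤ) (hp : 2 ≤ p) (hs1 : 1 ≤ s) (hs2 : s ≤ p - 1)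
    (hr : r = 1 ∨ r = 2) (u : ℂ) (hu : ‖u‖ < 1) :
    Summable (fun n : ℤ => ‖u ^ (((r + 2 * n) * p - s) ^ 2)‖) ∧
    Summable (fun n : ℕ => ‖(2 * (n : ℂ) + (r : ℂ)) *
        (u ^ (((2 * (n : ℤ) + r) * p - s) ^ 2)
          - u ^ (((2 * (n : ℤ) + r) * p + s) ^ 2))‖) ∧
    Summable (fun n : ℕ => ‖(2 * (n : ℂ) + 3 - (r : ℂ)) *
        (u ^ (((2 * (n : ℤ) + 3 - r) * p - (p - s)) ^ 2)
          - u ^ (((2 * (n : ℤ) + 3 - r) * p + (p - s)) ^ 2))‖) ∧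
    (∑' n : ℤ, u ^ (((r + 2 * n) * p - s) ^ 2))
      = (∑' n : ℕ, (2 * (n : ℂ) + (r : ℂ)) *
            (u ^ (((2 * (n : ℤ) + r) * p - s) ^ 2)
              - u ^ (((2 * (n : ℤ) + r) * p + s) ^ 2)))
        + ∑' n : ℕ, (2 * (n : ℂ) + 3 - (r : ℂ)) *
            (u ^ (((2 * (n : ℤ) + 3 - r) * p - (p - s)) ^ 2)
              - u ^ (((2 * (n : ℤ) + 3 - r) * p + (p - s)) ^ 2)) := by
  have hdec : CharDecomposition p r s u := by
    rcases hr with rfl | rfl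
    · exact charDecomposition_one hu (by omega) (by omega) (by omega)
    · exact (charDecomposition_one hu (by omega) (by omega) (by omega)).two_of_one
  simp only [CharDecomposition, tripletTerm_three_sub] at hdec
  exact hdec
end

section
/- Let p and s be integers with p ≥ 2 and 1 ≤ s ≤ p−1, let r ∈ {1,2}, and let u be a complex number with |u| < 1. For each integer k set R_k = max(r+2k, 2−r−2k). Then Σ_{k∈ℤ} Σ_{n=0}^∞ (u^{((R_k+2n)p−s)²} − u^{((R_k+2n)p+s)²}) = Σ_{n=0}^∞ (2n+r)(u^{((2n+r)p−s)²} − u^{((2n+r)p+s)²}), the double series on the left converging absolutely. -/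
/-!
Since `max (r + 2k) (2 - r - 2k) = 2 t_k + r` with `t_k = max k (1 - r - k) ≥ 0`, the
left-hand side is `∑_{k,n} g (t_k + n)` with `g m = charTerm p s u (2m + r)`. Regrouping
this absolutely convergent double series by the value `m = t_k + n` gives
`∑_m #{k | t_k ≤ m} g m`, and `t_k ≤ m` exactly for the `2m + r` integers
`k ∈ [1 - r - m, m]`.
-/

section AddFiber

variable {ι : Type*} (t : ι → ℕ)

def addFiberEquiv (m : ℕ) : (fun q : ι × ℕ => t q.1 + q.2) ⁻¹' {m} ≃ {k | t k ≤ m} where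
  toFun q := ⟨q.1.1, by
    have : t q.1.1 + q.1.2 = m := q.2
    show t q.1.1 ≤ m
    omega⟩
  invFun k := ⟨(k.1, m - t k.1), by
    have : t k.1 ≤ m := k.2
    show t k.1 + (m - t k.1) = m
    omega⟩
  left_inv q := by
    obtain ⟨⟨k, n⟩, hq⟩ := q
    simp only [Set.mem_preimage, Set.mem_singleton_iff] at hq
    subst hq
    simp
  right_inv _ := rfl

theorem tsum_preimage_add_eq_card_nsmul {G : Type*} [AddCommGroup G] [TopologicalSpace G]
    [IsTopologicalAddGroup G] [T2Space G] (f : ℕ → G) (m : ℕ) :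
    ∑' q : (fun q : ι × ℕ => t q.1 + q.2) ⁻¹' {m}, f (t q.1.1 + q.1.2)
      = Nat.card {k | t k ≤ m} • f m := by
  rw [tsum_congr fun q => congrArg f q.2, tsum_const, Nat.card_congr (addFiberEquiv t m)]

theorem summable_norm_comp_add {E : Type*} [SeminormedAddCommGroup E]
    (ht : ∀ m, {k | t k ≤ m}.Finite) {f : ℕ → E}
    (hf : Summable fun m => Nat.card {k | t k ≤ m} * ‖f m‖) :
    Summable fun q : ι × ℕ => ‖f (t q.1 + q.2)‖ := by
  rw [summable_partition (fun _ => norm_nonneg _)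
    (s := fun m => (fun q : ι × ℕ => t q.1 + q.2) ⁻¹' {m}) fun q => ⟨_, rfl, fun _ h => h.symm⟩]
  refine ⟨fun m => ?_, ?_⟩
  · have := (ht m).to_subtype
    have := Finite.of_equiv _ (addFiberEquiv t m).symm
    exact Summable.of_finite
  · convert hf using 2 with m
    rw [tsum_preimage_add_eq_card_nsmul t (fun m => ‖f m‖), nsmul_eq_mul]

theorem tsum_tsum_comp_add {E : Type*} [NormedAddCommGroup E] [CompleteSpace E] {f : ℕ → E}
    (hf : Summable fun q : ι × ℕ => f (t q.1 + q.2)) :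
    ∑' k, ∑' n, f (t k + n) = ∑' m, Nat.card {k | t k ≤ m} • f m := by
  rw [← hf.tsum_prod, ← (hf.hasSum.tsum_fiberwise _).tsum_eq]
  exact tsum_congr (tsum_preimage_add_eq_card_nsmul t f)

end AddFiber

theorem norm_zpow_le_pow_of_le {𝕜 : Type*} [NormedDivisionRing 𝕜] {u : 𝕜} (hu : ‖u‖ ≤ 1)
    {n : ℕ} {e : ℤ} (hne : n ≤ e) : ‖u ^ e‖ ≤ ‖u‖ ^ n := by
  lift e to ℕ using (Int.natCast_nonneg n).trans hne
  rw [zpow_natCast, norm_pow]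
  exact pow_le_pow_of_le_one (norm_nonneg u) hu (by exact_mod_cast hne)

noncomputable def charTerm (p s : ℤ) (u : ℂ) (m : ℤ) : ℂ :=
  u ^ ((m * p - s) ^ 2) - u ^ ((m * p + s) ^ 2)

theorem norm_charTerm_le {p s : ℤ} (hs1 : 1 ≤ s) (hs2 : s ≤ p - 1) {u : ℂ} (hu : ‖u‖ ≤ 1)
    {n : ℕ} {m : ℤ} (hnm : n ≤ m) : ‖charTerm p s u m‖ ≤ 2 * ‖u‖ ^ n := by
  obtain ⟨hminus, hplus⟩ : (n : ℤ) ≤ (m * p - s) ^ 2 ∧ (n : ℤ) ≤ (m * p + s) ^ 2 := by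
    rcases (show m = 0 ∨ 1 ≤ m by omega) with rfl | hm
    · obtain rfl : n = 0 := by omega
      constructor <;> positivity
    · have : m ≤ m * p - s := by nlinarith
      constructor <;> nlinarith
  calc ‖charTerm p s u m‖ ≤ ‖u ^ ((m * p - s) ^ 2)‖ + ‖u ^ ((m * p + s) ^ 2)‖ := norm_sub_le _ _
    _ ≤ ‖u‖ ^ n + ‖u‖ ^ n :=
      add_le_add (norm_zpow_le_pow_of_le hu hminus) (norm_zpow_le_pow_of_le hu hplus)
    _ = 2 * ‖u‖ ^ n := by ring

theorem max_add_two_mul_eq (r k : ℤ) :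
    max (r + 2 * k) (2 - r - 2 * k) = 2 * max k (1 - r - k) + r := by
  rcases le_total k (1 - r - k) with h | h
  · rw [max_eq_right (by omega), max_eq_right h]; ring
  · rw [max_eq_left (by omega), max_eq_left h]; ring

theorem setOf_toNat_max_le_eq_Icc (r : ℤ) (m : ℕ) :
    {k : ℤ | (max k (1 - r - k)).toNat ≤ m} = Set.Icc (1 - r - m) m := by
  ext k
  simp only [Set.mem_ofPred_eq, Set.mem_Icc]
  omega

theorem natCast_card_setOf_toNat_max_le {r : ℤ} (hr : 0 ≤ r) (m : ℕ) :
    (Nat.card {k : ℤ | (max k (1 - r - k)).toNat ≤ m} : ℤ) = 2 * m + r := by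
  rw [setOf_toNat_max_le_eq_Icc, Nat.card_eq_fintype_card,
    Int.card_fintype_Icc_of_le _ _ (by omega)]
  ring

theorem natCast_toNat_max_eq {r : ℤ} (hr : r ≤ 2) (k : ℤ) :
    ((max k (1 - r - k)).toNat : ℤ) = max k (1 - r - k) := by
  have := le_max_left k (1 - r - k)
  have := le_max_right k (1 - r - k)
  omega

theorem summable_linear_mul_pow {x : ℝ} (hx0 : 0 ≤ x) (hx1 : x < 1) (a b : ℝ) :
    Summable fun m : ℕ => (a * m + b) * x ^ m := by
  have hlin := (summable_pow_mul_geometric_of_norm_lt_one 1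
    (by rwa [Real.norm_of_nonneg hx0])).mul_left a
  refine (hlin.add ((summable_geometric_of_lt_one hx0 hx1).mul_left b)).congr fun m => ?_
  simp only [pow_one]
  ring

theorem stmt_5_general (p s r : ℤ) (hs1 : 1 ≤ s) (hs2 : s ≤ p - 1)
    (hr : r = 1 ∨ r = 2) (u : ℂ) (hu : ‖u‖ < 1) :
    Summable (fun q : ℤ × ℕ =>
        ‖u ^ (((max (r + 2 * q.1) (2 - r - 2 * q.1) + 2 * (q.2 : ℤ)) * p - s) ^ 2)
          - u ^ (((max (r + 2 * q.1) (2 - r - 2 * q.1) + 2 * (q.2 : ℤ)) * p + s) ^ 2)‖) ∧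
    (∑' k : ℤ, ∑' n : ℕ,
        (u ^ (((max (r + 2 * k) (2 - r - 2 * k) + 2 * (n : ℤ)) * p - s) ^ 2)
          - u ^ (((max (r + 2 * k) (2 - r - 2 * k) + 2 * (n : ℤ)) * p + s) ^ 2)))
      = ∑' n : ℕ, (2 * (n : ℂ) + (r : ℂ)) *
          (u ^ (((2 * (n : ℤ) + r) * p - s) ^ 2)
            - u ^ (((2 * (n : ℤ) + r) * p + s) ^ 2)) := by
  obtain ⟨hr0, hr2⟩ : 0 ≤ r ∧ r ≤ 2 := by omega
  have hreindex (k : ℤ) (n : ℕ) :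
      u ^ (((max (r + 2 * k) (2 - r - 2 * k) + 2 * (n : ℤ)) * p - s) ^ 2)
        - u ^ (((max (r + 2 * k) (2 - r - 2 * k) + 2 * (n : ℤ)) * p + s) ^ 2)
        = charTerm p s u (2 * ((max k (1 - r - k)).toNat + n : ℕ) + r) := by
    rw [charTerm, Nat.cast_add, natCast_toNat_max_eq hr2, max_add_two_mul_eq]
    ring_nf
  have hsummable : Summable fun m : ℕ => Nat.card {k : ℤ | (max k (1 - r - k)).toNat ≤ m}
      * ‖charTerm p s u (2 * m + r)‖ := by
    refine ((summable_linear_mul_pow (norm_nonneg u) hu 2 r).mul_left 2).of_nonneg_of_le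
      (fun m => by positivity) fun m => ?_
    rw [show (Nat.card {k : ℤ | (max k (1 - r - k)).toNat ≤ m} : ℝ) = 2 * m + r by
      exact_mod_cast natCast_card_setOf_toNat_max_le hr0 m, mul_left_comm]
    exact mul_le_mul_of_nonneg_left (norm_charTerm_le hs1 hs2 hu.le (by omega)) (by positivity)
  have hnorm := summable_norm_comp_add (fun k : ℤ => (max k (1 - r - k)).toNat)
    (fun m => by simpa only [setOf_toNat_max_le_eq_Icc] using Set.finite_Icc _ _) hsummable
  simp only [hreindex]
  refine ⟨hnorm, ?_⟩
  refine (tsum_tsum_comp_add (fun k : ℤ => (max k (1 - r - k)).toNat)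
    (f := fun m => charTerm p s u (2 * m + r)) hnorm.of_norm).trans (tsum_congr fun m => ?_)
  rw [nsmul_eq_mul, ← Int.cast_natCast, natCast_card_setOf_toNat_max_le hr0]
  push_cast
  rfl

/-- Character form of the decomposition `W_{r,s} = ⊕_{k∈ℤ} M_{2k+r,s}`:
with `R_k = max(r+2k, 2−r−2k)`,
`Σ_{k∈ℤ} Σ_{n≥0} (u^{((R_k+2n)p−s)²} − u^{((R_k+2n)p+s)²})
   = Σ_{n≥0} (2n+r)(u^{((2n+r)p−s)²} − u^{((2n+r)p+s)²})`,
the double series on the left converging absolutely, for `p ≥ 2`, `1 ≤ s ≤ p−1`,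
`r ∈ {1,2}` and `|u| < 1`. -/
theorem stmt_5 (p s r : ℤ) (hp : 2 ≤ p) (hs1 : 1 ≤ s) (hs2 : s ≤ p - 1)
    (hr : r = 1 ∨ r = 2) (u : ℂ) (hu : ‖u‖ < 1) :
    Summable (fun q : ℤ × ℕ =>
        ‖u ^ (((max (r + 2 * q.1) (2 - r - 2 * q.1) + 2 * (q.2 : ℤ)) * p - s) ^ 2)
          - u ^ (((max (r + 2 * q.1) (2 - r - 2 * q.1) + 2 * (q.2 : ℤ)) * p + s) ^ 2)‖) ∧
    (∑' k : ℤ, ∑' n : ℕ,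
        (u ^ (((max (r + 2 * k) (2 - r - 2 * k) + 2 * (n : ℤ)) * p - s) ^ 2)
          - u ^ (((max (r + 2 * k) (2 - r - 2 * k) + 2 * (n : ℤ)) * p + s) ^ 2)))
      = ∑' n : ℕ, (2 * (n : ℂ) + (r : ℂ)) *
          (u ^ (((2 * (n : ℤ) + r) * p - s) ^ 2)
            - u ^ (((2 * (n : ℤ) + r) * p + s) ^ 2)) :=
  stmt_5_general p s r hs1 hs2 hr u hu
end

section
/- Let N be an integer, set R = max(N, 2−N), and let u be a complex number with |u| < 1. Then Σ_{ℓ=0}^∞ (−1)^ℓ u^{(2N+2ℓ−1)²} = Σ_{m=0}^∞ (u^{(2(R+2m)−1)²} − u^{(2(R+2m)+1)²}), both series converging absolutely. -/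
/-!
Write `θ_N(u) = Σ_{ℓ≥0} (-1)^ℓ u^{(2N+2ℓ-1)²}`. Grouping the terms in consecutive pairs turns
`θ_N` into the singlet character `Σ_{m≥0} (u^{(2(N+2m)-1)²} - u^{(2(N+2m)+1)²})`. Moreover
`θ_N = θ_{2-N}`: for `N = 1 - k` the first `2k` terms of `θ_N` cancel, since
`2N + 2ℓ - 1 ↦ -(2N + 2ℓ - 1)` reverses them while flipping the sign, and the remaining tail is
`θ_{1+k}`. As `max N (2 - N)` is `N` or `2 - N`, the identity follows.
-/

open Finset

lemma summable_pow_of_le_add {x : ℝ} (hx₀ : 0 ≤ x) (hx₁ : x < 1) {e : ℕ → ℕ} (k : ℕ)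
    (he : ∀ n, n ≤ e (n + k)) : Summable fun n => x ^ e n := by
  rw [← summable_nat_add_iff k]
  exact (summable_geometric_of_lt_one hx₀ hx₁).of_nonneg_of_le (fun n => by positivity)
    fun n => pow_le_pow_of_le_one hx₀ hx₁.le (he n)

lemma summable_zpow_sq_affine {x : ℝ} (hx₀ : 0 ≤ x) (hx₁ : x < 1) {a : ℤ} (ha : a ≠ 0)
    (b : ℤ) : Summable fun n : ℕ => x ^ ((a * n + b) ^ 2) := by
  have hnat (n : ℕ) : x ^ ((a * n + b) ^ 2) = x ^ ((a * n + b).natAbs ^ 2) := by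
    rw [← zpow_natCast, Nat.cast_pow, Int.natAbs_sq]
  simp_rw [hnat]
  refine summable_pow_of_le_add hx₀ hx₁ b.natAbs fun n => ?_
  set z := a * ↑(n + b.natAbs) + b
  have hlin : (n : ℤ) ≤ |z| := by
    have h₁ : (↑(n + b.natAbs) : ℤ) ≤ |a * ↑(n + b.natAbs)| := by
      rw [abs_mul, Nat.abs_cast]
      exact le_mul_of_one_le_left (Nat.cast_nonneg _) (Int.one_le_abs ha)
    have h₂ := abs_add_le z (-b)
    rw [add_neg_cancel_right, abs_neg] at h₂
    push_cast [Int.natCast_natAbs] at h₁ h₂ ⊢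
    linarith
  rw [Int.abs_eq_natAbs] at hlin
  exact (Nat.cast_le.mp hlin).trans (Nat.le_self_pow two_ne_zero _)

section PartialTheta

variable {𝕜 : Type*}

def partialThetaTerm [DivisionRing 𝕜] (u : 𝕜) (N : ℤ) (l : ℕ) : 𝕜 :=
  (-1) ^ l * u ^ ((2 * N + 2 * (l : ℤ) - 1) ^ 2)

section Algebra

variable [Field 𝕜] (u : 𝕜)

lemma partialThetaTerm_add (N : ℤ) (l j : ℕ) :
    partialThetaTerm u N (l + j) = (-1) ^ j * partialThetaTerm u (N + j) l := by
  simp only [partialThetaTerm]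
  rw [pow_add]
  push_cast
  ring_nf

lemma partialThetaTerm_two_mul_add_succ (N : ℤ) (m : ℕ) :
    partialThetaTerm u N (2 * m) + partialThetaTerm u N (2 * m + 1)
      = u ^ ((2 * (N + 2 * (m : ℤ)) - 1) ^ 2) - u ^ ((2 * (N + 2 * (m : ℤ)) + 1) ^ 2) := by
  simp only [partialThetaTerm, pow_succ, pow_mul]
  push_cast
  ring_nf

/-- The first `2k` terms of `θ_{1-k}` cancel: term `i + 1` of `θ_{-k}` is minus term `i` of
`θ_{1-k}`, and the two outer terms of `θ_{-k}` are `± u^{(2k+1)²}`. -/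
lemma sum_range_partialThetaTerm_one_sub (k : ℕ) :
    ∑ i ∈ range (2 * k), partialThetaTerm u (1 - k) i = 0 := by
  induction k with
  | zero => simp
  | succ k ih =>
    have hshift (i : ℕ) : partialThetaTerm u (1 - ↑(k + 1)) (i + 1)
        = -partialThetaTerm u (1 - k) i := by
      rw [partialThetaTerm_add]
      push_cast
      ring_nf
    have houter : partialThetaTerm u (1 - ↑(k + 1)) 0
        + partialThetaTerm u (1 - ↑(k + 1)) (2 * k + 1) = 0 := by
      simp only [partialThetaTerm, pow_succ, pow_mul]
      push_cast
      ring_nf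
    rw [show 2 * (k + 1) = 2 * k + 1 + 1 by ring, sum_range_succ, sum_range_succ']
    rw [sum_congr rfl fun i _ => hshift i, sum_neg_distrib, ih, neg_zero, zero_add]
    exact houter

end Algebra

section Analysis

variable [NormedField 𝕜] {u : 𝕜}

lemma summable_norm_partialThetaTerm (hu : ‖u‖ < 1) (N : ℤ) :
    Summable fun l => ‖partialThetaTerm u N l‖ := by
  refine (summable_zpow_sq_affine (norm_nonneg u) hu two_ne_zero (2 * N - 1)).congr fun l => ?_
  simp only [partialThetaTerm, norm_mul, norm_pow, norm_neg, norm_one, one_pow, one_mul,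
    norm_zpow]
  ring_nf

lemma summable_norm_partialThetaTerm_pair (hu : ‖u‖ < 1) (N : ℤ) :
    Summable fun m : ℕ => ‖partialThetaTerm u N (2 * m) + partialThetaTerm u N (2 * m + 1)‖ := by
  have hs := summable_norm_partialThetaTerm hu N
  have hinj₁ : Function.Injective fun m : ℕ => 2 * m := fun a b h => by simpa using h
  have hinj₂ : Function.Injective fun m : ℕ => 2 * m + 1 := fun a b h => by simpa using h
  exact ((hs.comp_injective hinj₁).add (hs.comp_injective hinj₂)).of_nonneg_of_le
    (fun m => norm_nonneg _) fun m => norm_add_le _ _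

variable [CompleteSpace 𝕜]

lemma tsum_partialThetaTerm_eq_tsum_pair (hu : ‖u‖ < 1) (N : ℤ) :
    ∑' l, partialThetaTerm u N l
      = ∑' m : ℕ, (u ^ ((2 * (N + 2 * (m : ℤ)) - 1) ^ 2)
          - u ^ ((2 * (N + 2 * (m : ℤ)) + 1) ^ 2)) := by
  have hs := (summable_norm_partialThetaTerm hu N).of_norm
  have heven : Summable fun m : ℕ => partialThetaTerm u N (2 * m) :=
    hs.comp_injective fun a b h => by simpa using h
  have hodd : Summable fun m : ℕ => partialThetaTerm u N (2 * m + 1) :=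
    hs.comp_injective fun a b h => by simpa using h
  rw [← tsum_even_add_odd heven hodd, ← heven.tsum_add hodd]
  exact tsum_congr (partialThetaTerm_two_mul_add_succ u N)

lemma tsum_partialThetaTerm_one_sub (hu : ‖u‖ < 1) (k : ℕ) :
    ∑' l, partialThetaTerm u (1 - k) l = ∑' l, partialThetaTerm u (1 + k) l := by
  rw [← (summable_norm_partialThetaTerm hu (1 - k)).of_norm.sum_add_tsum_nat_add (2 * k),
    sum_range_partialThetaTerm_one_sub, zero_add]
  refine tsum_congr fun l => ?_
  rw [partialThetaTerm_add, pow_mul, neg_one_sq, one_pow, one_mul]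
  congr 1
  push_cast
  ring

lemma tsum_partialThetaTerm_two_sub (hu : ‖u‖ < 1) (N : ℤ) :
    ∑' l, partialThetaTerm u (2 - N) l = ∑' l, partialThetaTerm u N l := by
  rcases le_total N 1 with hN | hN
  · obtain ⟨k, hk⟩ := Int.eq_ofNat_of_zero_le (sub_nonneg.mpr hN)
    rw [show N = 1 - k by omega, show 2 - (1 - (k : ℤ)) = 1 + k by ring,
      tsum_partialThetaTerm_one_sub hu]
  · obtain ⟨k, hk⟩ := Int.eq_ofNat_of_zero_le (sub_nonneg.mpr hN)
    rw [show N = 1 + k by omega, show 2 - (1 + (k : ℤ)) = 1 - k by ring,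
      tsum_partialThetaTerm_one_sub hu]

end Analysis

end PartialTheta

/-- Branching-function identity for `sl(2)`-hat at level `−1/2`:
with `R = max(N, 2−N)`,
`Σ_{ℓ≥0} (−1)^ℓ u^{(2N+2ℓ−1)²} = Σ_{m≥0} (u^{(2(R+2m)−1)²} − u^{(2(R+2m)+1)²})`,
both series converging absolutely, for `N ∈ ℤ` and `|u| < 1`. -/
theorem stmt_6 (N : ℤ) (u : ℂ) (hu : ‖u‖ < 1) :
    Summable (fun l : ℕ => ‖(-1 : ℂ) ^ l * u ^ ((2 * N + 2 * (l : ℤ) - 1) ^ 2)‖) ∧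
    Summable (fun m : ℕ =>
        ‖u ^ ((2 * (max N (2 - N) + 2 * (m : ℤ)) - 1) ^ 2)
          - u ^ ((2 * (max N (2 - N) + 2 * (m : ℤ)) + 1) ^ 2)‖) ∧
    (∑' l : ℕ, (-1 : ℂ) ^ l * u ^ ((2 * N + 2 * (l : ℤ) - 1) ^ 2))
      = ∑' m : ℕ, (u ^ ((2 * (max N (2 - N) + 2 * (m : ℤ)) - 1) ^ 2)
          - u ^ ((2 * (max N (2 - N) + 2 * (m : ℤ)) + 1) ^ 2)) := by
  set R := max N (2 - N)
  have hθ : ∑' l, partialThetaTerm u R l = ∑' l, partialThetaTerm u N l := by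
    rcases max_choice N (2 - N) with h | h
    · rw [show R = N from h]
    · rw [show R = 2 - N from h, tsum_partialThetaTerm_two_sub hu N]
  refine ⟨summable_norm_partialThetaTerm hu N, ?_, ?_⟩
  · simpa only [partialThetaTerm_two_mul_add_succ] using
      summable_norm_partialThetaTerm_pair hu R
  · rw [← tsum_partialThetaTerm_eq_tsum_pair hu R, hθ]
    rfl
end

section
/- Let λ ∈ {0,1} and s ∈ ℤ, and let u, w be complex numbers with 0 < |u| < 1 and |u|^{2−2s} < |w| < |u|^{−2s−2}. For each integer n set R_n = max(2n+λ+1, 1−2n−λ). Then Σ_{n∈ℤ} w^{4n+2λ−s} ( Σ_{ℓ=0}^∞ (−1)^ℓ u^{(2ℓ+s+1)(8n+4λ+2ℓ−s+1)} ) = Σ_{n∈ℤ} w^{4n+2λ−s} u^{−(4n+2λ−s)²} ( Σ_{m=0}^∞ (u^{(2(R_n+2m)−1)²} − u^{(2(R_n+2m)+1)²}) ), where each inner series over ℓ and over m converges absolutely for |u| < 1, and both outer series over n converge absolutely in the stated annulus. -/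
/-!
With `a = 2n + λ` and `N = 2a - s`, the exponent `(2ℓ+s+1)(4a+2ℓ-s+1)` equals `(2ℓ+2a+1)² - N²`,
so the series over `ℓ` is `u^{-N²} θ(2a+1)` for the false theta series
`θ(K) = Σ_ℓ (-1)^ℓ u^{(2ℓ+K)²}`. Pairing consecutive terms gives `θ(2R-1) = ch M_{R,1}`, which is
the claim for `a ≥ 0`; for `a < 0` one first reflects `θ(1-2j) = θ(1+2j)`, the leading `2j` terms
of `θ(1-2j)` cancelling in pairs.

For convergence over `n`, `|ch M_{R,1}| ≤ 2|u|^{(2R-1)²}/(1-|u|)` and `(2R-1)² ≥ (N+s±1)²`, so the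
`n`-th term is bounded both by a multiple of `(|w| |u|^{2s+2})^N` and by one of `(|w| |u|^{2s-2})^N`.
The annulus makes the first ratio smaller than `1` and the second larger than `1`, which gives
geometric decay as `N → ±∞`.
-/

noncomputable def alternatingTheta (u : ℂ) (K : ℤ) : ℂ :=
  ∑' l : ℕ, (-1 : ℂ) ^ l * u ^ ((2 * (l : ℤ) + K) ^ 2)

-- The `η²`-rescaled character of the singlet module `M_{R,1}`.
noncomputable def singletChar (u : ℂ) (R : ℤ) : ℂ :=
  ∑' m : ℕ, (u ^ ((2 * (R + 2 * (m : ℤ)) - 1) ^ 2) - u ^ ((2 * (R + 2 * (m : ℤ)) + 1) ^ 2))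

section
variable {u : ℂ}

theorem summable_norm_alternatingTheta_term (hu0 : 0 < ‖u‖) (hu1 : ‖u‖ < 1) (K : ℤ) :
    Summable fun l : ℕ => ‖(-1 : ℂ) ^ l * u ^ ((2 * (l : ℤ) + K) ^ 2)‖ := by
  refine .of_nonneg_of_le (fun _ => norm_nonneg _) (fun l => ?_)
    ((summable_geometric_of_lt_one hu0.le hu1).mul_left (‖u‖ ^ (-K ^ 2)))
  have hexp : -K ^ 2 + l ≤ (2 * (l : ℤ) + K) ^ 2 := by
    nlinarith [Int.le_self_sq (l : ℤ), sq_nonneg ((l : ℤ) + K), sq_nonneg (l : ℤ)]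
  calc ‖(-1 : ℂ) ^ l * u ^ ((2 * (l : ℤ) + K) ^ 2)‖ = ‖u‖ ^ ((2 * (l : ℤ) + K) ^ 2) := by
        simp [norm_zpow]
    _ ≤ ‖u‖ ^ (-K ^ 2 + l) := zpow_le_zpow_right_of_le_one₀ hu0 hu1.le hexp
    _ = ‖u‖ ^ (-K ^ 2) * ‖u‖ ^ l := by rw [zpow_add₀ hu0.ne', zpow_natCast]

theorem alternatingTheta_add_alternatingTheta_add_two (hu0 : 0 < ‖u‖) (hu1 : ‖u‖ < 1)
    (K : ℤ) : alternatingTheta u K + alternatingTheta u (K + 2) = u ^ (K ^ 2) := by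
  have hshift : ∀ l : ℕ, (-1 : ℂ) ^ (l + 1) * u ^ ((2 * ((l + 1 : ℕ) : ℤ) + K) ^ 2)
      = -((-1 : ℂ) ^ l * u ^ ((2 * (l : ℤ) + (K + 2)) ^ 2)) := fun l => by
    rw [pow_succ]; push_cast; ring_nf
  rw [alternatingTheta, (summable_norm_alternatingTheta_term hu0 hu1 K).of_norm.tsum_eq_zero_add,
    tsum_congr hshift, tsum_neg, alternatingTheta]
  simp

theorem alternatingTheta_one_sub (hu0 : 0 < ‖u‖) (hu1 : ‖u‖ < 1) (j : ℕ) :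
    alternatingTheta u (1 - 2 * j) = alternatingTheta u (1 + 2 * j) := by
  -- `D K := θ K - θ (2 - K)` satisfies `D K = -D (K + 2)`, because `θ K + θ (K + 2) = u ^ K²`
  -- sees only `K²`.
  induction j with
  | zero => rfl
  | succ j ih =>
    have h₁ := alternatingTheta_add_alternatingTheta_add_two hu0 hu1 (-1 - 2 * j)
    have h₂ := alternatingTheta_add_alternatingTheta_add_two hu0 hu1 (1 + 2 * j)
    push_cast
    ring_nf at h₁ h₂ ih ⊢
    linear_combination h₁ - h₂ - ih

theorem alternatingTheta_two_mul_sub_one (hu0 : 0 < ‖u‖) (hu1 : ‖u‖ < 1) (R : ℤ) :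
    alternatingTheta u (2 * R - 1) = singletChar u R := by
  set f : ℕ → ℂ := fun l => (-1 : ℂ) ^ l * u ^ ((2 * (l : ℤ) + (2 * R - 1)) ^ 2)
  have hf : Summable f := (summable_norm_alternatingTheta_term hu0 hu1 _).of_norm
  have heven : ∀ m : ℕ, f (2 * m) = u ^ ((2 * (R + 2 * (m : ℤ)) - 1) ^ 2) := fun m => by
    simp only [f, pow_mul, neg_one_sq, one_pow, one_mul]; push_cast; ring_nf
  have hodd : ∀ m : ℕ, f (2 * m + 1) = -u ^ ((2 * (R + 2 * (m : ℤ)) + 1) ^ 2) := fun m => by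
    simp only [f, pow_succ, pow_mul]; push_cast; ring_nf
  have he : Summable fun m : ℕ => f (2 * m) :=
    hf.comp_injective (mul_right_injective₀ two_ne_zero)
  have ho : Summable fun m : ℕ => f (2 * m + 1) :=
    hf.comp_injective fun a b h => by omega
  rw [alternatingTheta, ← tsum_even_add_odd he ho, tsum_congr heven, tsum_congr hodd,
    ← (he.congr heven).tsum_add (ho.congr hodd), singletChar]
  simp only [sub_eq_add_neg]

theorem alternatingTheta_two_mul_add_one (hu0 : 0 < ‖u‖) (hu1 : ‖u‖ < 1) (a : ℤ) :
    alternatingTheta u (2 * a + 1) = singletChar u (max (a + 1) (1 - a)) := by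
  rcases le_or_gt 0 a with ha | ha
  · rw [max_eq_left (by omega), ← alternatingTheta_two_mul_sub_one hu0 hu1]
    ring_nf
  · obtain ⟨j, rfl⟩ := Int.exists_eq_neg_ofNat ha.le
    rw [max_eq_right (by omega), ← alternatingTheta_two_mul_sub_one hu0 hu1,
      show 2 * -(j : ℤ) + 1 = 1 - 2 * j by ring, alternatingTheta_one_sub hu0 hu1]
    ring_nf

theorem norm_singletChar_term_le (hu0 : 0 < ‖u‖) (hu1 : ‖u‖ < 1) {R : ℤ} (hR : 0 ≤ R) (m : ℕ) :
    ‖u ^ ((2 * (R + 2 * (m : ℤ)) - 1) ^ 2) - u ^ ((2 * (R + 2 * (m : ℤ)) + 1) ^ 2)‖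
      ≤ 2 * ‖u‖ ^ ((2 * R - 1) ^ 2) * ‖u‖ ^ m := by
  have hle : ∀ e : ℤ, (2 * R - 1) ^ 2 + m ≤ e → ‖u‖ ^ e ≤ ‖u‖ ^ ((2 * R - 1) ^ 2) * ‖u‖ ^ m :=
    fun e he => by
      rw [← zpow_natCast, ← zpow_add₀ hu0.ne']
      exact zpow_le_zpow_right_of_le_one₀ hu0 hu1.le he
  have hm : (0 : ℤ) ≤ m := m.cast_nonneg
  calc _ ≤ ‖u ^ ((2 * (R + 2 * (m : ℤ)) - 1) ^ 2)‖ + ‖u ^ ((2 * (R + 2 * (m : ℤ)) + 1) ^ 2)‖ :=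
        norm_sub_le _ _
    _ ≤ ‖u‖ ^ ((2 * R - 1) ^ 2) * ‖u‖ ^ m + ‖u‖ ^ ((2 * R - 1) ^ 2) * ‖u‖ ^ m := by
        rw [norm_zpow, norm_zpow]
        gcongr <;> apply hle <;> nlinarith [mul_nonneg hR hm, Int.le_self_sq (m : ℤ)]
    _ = _ := by ring

theorem summable_norm_singletChar_term (hu0 : 0 < ‖u‖) (hu1 : ‖u‖ < 1) {R : ℤ} (hR : 0 ≤ R) :
    Summable fun m : ℕ =>
      ‖u ^ ((2 * (R + 2 * (m : ℤ)) - 1) ^ 2) - u ^ ((2 * (R + 2 * (m : ℤ)) + 1) ^ 2)‖ :=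
  .of_nonneg_of_le (fun _ => norm_nonneg _) (norm_singletChar_term_le hu0 hu1 hR)
    ((summable_geometric_of_lt_one hu0.le hu1).mul_left _)

theorem norm_singletChar_le (hu0 : 0 < ‖u‖) (hu1 : ‖u‖ < 1) {R : ℤ} (hR : 0 ≤ R) :
    ‖singletChar u R‖ ≤ 2 / (1 - ‖u‖) * ‖u‖ ^ ((2 * R - 1) ^ 2) := by
  calc ‖singletChar u R‖ ≤ _ := norm_tsum_le_tsum_norm (summable_norm_singletChar_term hu0 hu1 hR)
    _ ≤ ∑' m : ℕ, 2 * ‖u‖ ^ ((2 * R - 1) ^ 2) * ‖u‖ ^ m :=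
        (summable_norm_singletChar_term hu0 hu1 hR).tsum_le_tsum
          (norm_singletChar_term_le hu0 hu1 hR)
          ((summable_geometric_of_lt_one hu0.le hu1).mul_left _)
    _ = _ := by
        rw [tsum_mul_left, tsum_geometric_of_lt_one hu0.le hu1]
        ring

theorem resolution_term_eq (hu : u ≠ 0) (n lam s : ℤ) (l : ℕ) :
    (-1 : ℂ) ^ l * u ^ ((2 * (l : ℤ) + s + 1) * (8 * n + 4 * lam + 2 * (l : ℤ) - s + 1))
      = u ^ (-(4 * n + 2 * lam - s) ^ 2) *
        ((-1 : ℂ) ^ l * u ^ ((2 * (l : ℤ) + (2 * (2 * n + lam) + 1)) ^ 2)) := by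
  rw [mul_left_comm, ← zpow_add₀ hu]
  ring_nf

theorem summable_norm_resolution_term (hu0 : 0 < ‖u‖) (hu1 : ‖u‖ < 1) (n lam s : ℤ) :
    Summable fun l : ℕ =>
      ‖(-1 : ℂ) ^ l * u ^ ((2 * (l : ℤ) + s + 1) * (8 * n + 4 * lam + 2 * (l : ℤ) - s + 1))‖ := by
  refine ((summable_norm_alternatingTheta_term hu0 hu1 (2 * (2 * n + lam) + 1)).mul_left
    ‖u ^ (-(4 * n + 2 * lam - s) ^ 2)‖).congr fun l => ?_
  rw [resolution_term_eq (norm_pos_iff.mp hu0), norm_mul (u ^ _)]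

theorem tsum_resolution_eq (hu0 : 0 < ‖u‖) (hu1 : ‖u‖ < 1) (n lam s : ℤ) :
    ∑' l : ℕ, (-1 : ℂ) ^ l * u ^ ((2 * (l : ℤ) + s + 1) * (8 * n + 4 * lam + 2 * (l : ℤ) - s + 1))
      = u ^ (-(4 * n + 2 * lam - s) ^ 2) *
        singletChar u (max (2 * n + lam + 1) (1 - 2 * n - lam)) := by
  simp only [resolution_term_eq (norm_pos_iff.mp hu0), tsum_mul_left]
  rw [← alternatingTheta, alternatingTheta_two_mul_add_one hu0 hu1, sub_add_eq_sub_sub]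

theorem norm_fock_mul_singletChar_le (hu0 : 0 < ‖u‖) (hu1 : ‖u‖ < 1) (w : ℂ) (n lam s t : ℤ)
    (ht : t = s + 1 ∨ t = s - 1) :
    ‖w ^ (4 * n + 2 * lam - s) * u ^ (-(4 * n + 2 * lam - s) ^ 2) *
        singletChar u (max (2 * n + lam + 1) (1 - 2 * n - lam))‖
      ≤ 2 / (1 - ‖u‖) * ‖u‖ ^ (t ^ 2) * (‖w‖ * ‖u‖ ^ (2 * t)) ^ (4 * n + 2 * lam - s) := by
  have hsq : (4 * n + 2 * lam - s + t) ^ 2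
      ≤ (2 * max (2 * n + lam + 1) (1 - 2 * n - lam) - 1) ^ 2 := by
    rcases le_total 0 (2 * n + lam) with ha | ha
    · rw [max_eq_left (by omega)]; rcases ht with rfl | rfl <;> nlinarith
    · rw [max_eq_right (by omega)]; rcases ht with rfl | rfl <;> nlinarith
  set N := 4 * n + 2 * lam - s
  have hexp : ‖u‖ ^ (-N ^ 2) * ‖u‖ ^ ((N + t) ^ 2) = ‖u‖ ^ (t ^ 2) * (‖u‖ ^ (2 * t)) ^ N := by
    rw [← zpow_add₀ hu0.ne', ← zpow_mul, ← zpow_add₀ hu0.ne']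
    ring_nf
  set R := max (2 * n + lam + 1) (1 - 2 * n - lam)
  have hR : 0 ≤ R := by omega
  calc _ = ‖w‖ ^ N * ‖u‖ ^ (-N ^ 2) * ‖singletChar u R‖ := by simp only [norm_mul, norm_zpow]
    _ ≤ ‖w‖ ^ N * ‖u‖ ^ (-N ^ 2) * (2 / (1 - ‖u‖) * ‖u‖ ^ ((N + t) ^ 2)) := by
        gcongr
        exact (norm_singletChar_le hu0 hu1 hR).trans (mul_le_mul_of_nonneg_left
          (zpow_le_zpow_right_of_le_one₀ hu0 hu1.le hsq) (by positivity))
    _ = _ := by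
        rw [mul_zpow]
        linear_combination (‖w‖ ^ N * (2 / (1 - ‖u‖))) * hexp

end

theorem summable_int_of_le_geometric {f : ℤ → ℝ} (hf : ∀ n, 0 ≤ f n) {a b A B : ℝ}
    (ha0 : 0 ≤ a) (ha1 : a < 1) (hb : 1 < b)
    (hfa : ∀ n, f n ≤ A * a ^ n) (hfb : ∀ n, f n ≤ B * b ^ n) : Summable f := by
  have hb' : b⁻¹ < 1 := inv_lt_one_of_one_lt₀ hb
  refine .of_nat_of_neg_add_one ?_ ?_
  · refine .of_nonneg_of_le (fun _ => hf _) (fun k => ?_)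
      ((summable_geometric_of_lt_one ha0 ha1).mul_left A)
    simpa using hfa k
  · refine .of_nonneg_of_le (fun _ => hf _) (fun k => ?_)
      ((summable_geometric_of_lt_one (by positivity) hb').mul_left (B * b⁻¹))
    calc f (-(k + 1)) ≤ B * b ^ (-((k : ℤ) + 1)) := hfb _
      _ = B * b⁻¹ * b⁻¹ ^ k := by
        rw [zpow_neg, ← Nat.cast_succ, zpow_natCast, ← inv_pow, pow_succ']
        ring

theorem summable_norm_fock_mul_singletChar {u w : ℂ} {s : ℤ} (hu0 : 0 < ‖u‖) (hu1 : ‖u‖ < 1)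
    (hw1 : ‖u‖ ^ (2 - 2 * s) < ‖w‖) (hw2 : ‖w‖ < ‖u‖ ^ (-2 * s - 2)) (lam : ℤ) :
    Summable fun n : ℤ => ‖w ^ (4 * n + 2 * lam - s) * u ^ (-(4 * n + 2 * lam - s) ^ 2) *
      singletChar u (max (2 * n + lam + 1) (1 - 2 * n - lam))‖ := by
  have hw0 : 0 < ‖w‖ := (zpow_pos hu0 _).trans hw1
  have hpow : ∀ ρ : ℝ, 0 < ρ → ∀ n : ℤ,
      ρ ^ (4 * n + 2 * lam - s) = ρ ^ (2 * lam - s) * (ρ ^ (4 : ℤ)) ^ n := fun ρ hρ n => by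
    rw [← zpow_mul, ← zpow_add₀ hρ.ne']
    ring_nf
  have hlt : ‖w‖ * ‖u‖ ^ (2 * (s + 1)) < 1 := by
    calc ‖w‖ * ‖u‖ ^ (2 * (s + 1)) < ‖u‖ ^ (-2 * s - 2) * ‖u‖ ^ (2 * (s + 1)) := by gcongr
      _ = 1 := by rw [← zpow_add₀ hu0.ne']; ring_nf; exact zpow_zero _
  have hgt : 1 < ‖w‖ * ‖u‖ ^ (2 * (s - 1)) := by
    calc 1 = ‖u‖ ^ (2 - 2 * s) * ‖u‖ ^ (2 * (s - 1)) := by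
          rw [← zpow_add₀ hu0.ne']; ring_nf; exact (zpow_zero _).symm
      _ < ‖w‖ * ‖u‖ ^ (2 * (s - 1)) := by gcongr
  refine summable_int_of_le_geometric (fun _ => norm_nonneg _) (by positivity)
    (zpow_lt_one₀ (by positivity) hlt four_pos) (one_lt_zpow₀ hgt four_pos)
    (A := 2 / (1 - ‖u‖) * ‖u‖ ^ ((s + 1) ^ 2) * (‖w‖ * ‖u‖ ^ (2 * (s + 1))) ^ (2 * lam - s))
    (B := 2 / (1 - ‖u‖) * ‖u‖ ^ ((s - 1) ^ 2) * (‖w‖ * ‖u‖ ^ (2 * (s - 1))) ^ (2 * lam - s))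
    (fun n => ?_) (fun n => ?_)
  · refine (norm_fock_mul_singletChar_le hu0 hu1 w n lam s _ (.inl rfl)).trans_eq ?_
    rw [hpow _ (by positivity)]
    ring
  · refine (norm_fock_mul_singletChar_le hu0 hu1 w n lam s _ (.inr rfl)).trans_eq ?_
    rw [hpow _ (by positivity)]
    ring

theorem stmt_7_general (lam s : ℤ) (u w : ℂ)
    (hu0 : 0 < ‖u‖) (hu1 : ‖u‖ < 1)
    (hw1 : ‖u‖ ^ (2 - 2 * s) < ‖w‖) (hw2 : ‖w‖ < ‖u‖ ^ (-2 * s - 2)) :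
    (∀ n : ℤ, Summable (fun l : ℕ =>
        ‖(-1 : ℂ) ^ l *
          u ^ ((2 * (l : ℤ) + s + 1) * (8 * n + 4 * lam + 2 * (l : ℤ) - s + 1))‖)) ∧
    (∀ n : ℤ, Summable (fun m : ℕ =>
        ‖u ^ ((2 * (max (2 * n + lam + 1) (1 - 2 * n - lam) + 2 * (m : ℤ)) - 1) ^ 2)
          - u ^ ((2 * (max (2 * n + lam + 1) (1 - 2 * n - lam) + 2 * (m : ℤ)) + 1) ^ 2)‖)) ∧
    Summable (fun n : ℤ => ‖w ^ (4 * n + 2 * lam - s) *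
        ∑' l : ℕ, (-1 : ℂ) ^ l *
          u ^ ((2 * (l : ℤ) + s + 1) * (8 * n + 4 * lam + 2 * (l : ℤ) - s + 1))‖) ∧
    Summable (fun n : ℤ => ‖w ^ (4 * n + 2 * lam - s) * u ^ (-(4 * n + 2 * lam - s) ^ 2) *
        ∑' m : ℕ,
          (u ^ ((2 * (max (2 * n + lam + 1) (1 - 2 * n - lam) + 2 * (m : ℤ)) - 1) ^ 2)
            - u ^ ((2 * (max (2 * n + lam + 1) (1 - 2 * n - lam) + 2 * (m : ℤ)) + 1) ^ 2))‖) ∧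
    (∑' n : ℤ, w ^ (4 * n + 2 * lam - s) *
        ∑' l : ℕ, (-1 : ℂ) ^ l *
          u ^ ((2 * (l : ℤ) + s + 1) * (8 * n + 4 * lam + 2 * (l : ℤ) - s + 1)))
      = ∑' n : ℤ, w ^ (4 * n + 2 * lam - s) * u ^ (-(4 * n + 2 * lam - s) ^ 2) *
          ∑' m : ℕ,
            (u ^ ((2 * (max (2 * n + lam + 1) (1 - 2 * n - lam) + 2 * (m : ℤ)) - 1) ^ 2)
              - u ^ ((2 * (max (2 * n + lam + 1) (1 - 2 * n - lam) + 2 * (m : ℤ)) + 1) ^ 2)) := by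
  have hresolution (n : ℤ) := tsum_resolution_eq hu0 hu1 n lam s
  have hfock := summable_norm_fock_mul_singletChar hu0 hu1 hw1 hw2 lam
  refine ⟨fun n => summable_norm_resolution_term hu0 hu1 n lam s,
    fun n => summable_norm_singletChar_term hu0 hu1 (by omega), ?_, hfock, ?_⟩
  · simpa only [hresolution, mul_assoc] using hfock
  · exact tsum_congr fun n => by rw [hresolution, mul_assoc, singletChar]

/-- Full character decomposition `ch L_λ^s = Σ_{n∈ℤ} ch F_{2n+λ−s/2} · ch M_{2n+λ+1,1}`
for `sl(2)`-hat at level `−1/2`: with `R_n = max(2n+λ+1, 1−2n−λ)`,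
`Σ_{n∈ℤ} w^{4n+2λ−s} (Σ_{ℓ≥0} (−1)^ℓ u^{(2ℓ+s+1)(8n+4λ+2ℓ−s+1)})
 = Σ_{n∈ℤ} w^{4n+2λ−s} u^{−(4n+2λ−s)²} (Σ_{m≥0} (u^{(2(R_n+2m)−1)²} − u^{(2(R_n+2m)+1)²}))`,
each inner series converging absolutely for `|u| < 1`, and both outer series over `n`
converging absolutely in the annulus `|u|^{2−2s} < |w| < |u|^{−2s−2}`, `0 < |u| < 1`. -/
theorem stmt_7 (lam s : ℤ) (hlam : lam = 0 ∨ lam = 1) (u w : ℂ)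
    (hu0 : 0 < ‖u‖) (hu1 : ‖u‖ < 1)
    (hw1 : ‖u‖ ^ (2 - 2 * s) < ‖w‖) (hw2 : ‖w‖ < ‖u‖ ^ (-2 * s - 2)) :
    (∀ n : ℤ, Summable (fun l : ℕ =>
        ‖(-1 : ℂ) ^ l *
          u ^ ((2 * (l : ℤ) + s + 1) * (8 * n + 4 * lam + 2 * (l : ℤ) - s + 1))‖)) ∧
    (∀ n : ℤ, Summable (fun m : ℕ =>
        ‖u ^ ((2 * (max (2 * n + lam + 1) (1 - 2 * n - lam) + 2 * (m : ℤ)) - 1) ^ 2)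
          - u ^ ((2 * (max (2 * n + lam + 1) (1 - 2 * n - lam) + 2 * (m : ℤ)) + 1) ^ 2)‖)) ∧
    Summable (fun n : ℤ => ‖w ^ (4 * n + 2 * lam - s) *
        ∑' l : ℕ, (-1 : ℂ) ^ l *
          u ^ ((2 * (l : ℤ) + s + 1) * (8 * n + 4 * lam + 2 * (l : ℤ) - s + 1))‖) ∧
    Summable (fun n : ℤ => ‖w ^ (4 * n + 2 * lam - s) * u ^ (-(4 * n + 2 * lam - s) ^ 2) *
        ∑' m : ℕ,
          (u ^ ((2 * (max (2 * n + lam + 1) (1 - 2 * n - lam) + 2 * (m : ℤ)) - 1) ^ 2)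
            - u ^ ((2 * (max (2 * n + lam + 1) (1 - 2 * n - lam) + 2 * (m : ℤ)) + 1) ^ 2))‖) ∧
    (∑' n : ℤ, w ^ (4 * n + 2 * lam - s) *
        ∑' l : ℕ, (-1 : ℂ) ^ l *
          u ^ ((2 * (l : ℤ) + s + 1) * (8 * n + 4 * lam + 2 * (l : ℤ) - s + 1)))
      = ∑' n : ℤ, w ^ (4 * n + 2 * lam - s) * u ^ (-(4 * n + 2 * lam - s) ^ 2) *
          ∑' m : ℕ,
            (u ^ ((2 * (max (2 * n + lam + 1) (1 - 2 * n - lam) + 2 * (m : ℤ)) - 1) ^ 2)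
              - u ^ ((2 * (max (2 * n + lam + 1) (1 - 2 * n - lam) + 2 * (m : ℤ)) + 1) ^ 2)) :=
  stmt_7_general lam s u w hu0 hu1 hw1 hw2
end

section
/- Let s and m be integers, set R = max(m, 2−m), and let u be a complex number with 0 < |u| < 1. Then Σ_{ℓ=0}^∞ ( u^{4(3ℓ+s+1)(3m+3ℓ−s−2)} − u^{4(3ℓ+s+2)(3m+3ℓ−s−1)} ) = u^{−(3m−2s−3)²} · Σ_{j=0}^∞ ( u^{(3(R+2j)−1)²} − u^{(3(R+2j)+1)²} ), all series converging absolutely. -/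
/-!
Both exponents on the left complete to a square around the same centre:
`4(3ℓ+s+1)(3m+3ℓ−s−2) = (3(m+2ℓ)−1)² − (3m−2s−3)²` and
`4(3ℓ+s+2)(3m+3ℓ−s−1) = (3(m+2ℓ)+1)² − (3m−2s−3)²`.
So the left side is `u^{−(3m−2s−3)²} Σ_{ℓ≥0} g(m+2ℓ)` with `g(r) = u^{(3r−1)²} − u^{(3r+1)²}`
(`singletTerm u r`), which is odd in `r`. For `m ≥ 1` this is already the right side; for `m ≤ 0`
the first `1 − m` terms `g(m), g(m+2), …, g(−m)` cancel in pairs and the remaining ones start at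
`R = 2 − m`.
-/

open Finset Filter

section OddPart

variable {G : Type*} [AddCommGroup G]

theorem Finset.sum_range_sub_neg_eq_zero (a : ℤ → G) (k : ℕ) :
    ∑ l ∈ range k, (a (1 - k + 2 * l) - a (-(1 - k + 2 * l))) = 0 := by
  rw [sum_sub_distrib, sub_eq_zero, ← sum_range_reflect]
  refine sum_congr rfl fun l hl => ?_
  have hcast : ((k - 1 - l : ℕ) : ℤ) = k - 1 - l := by
    have := mem_range.mp hl
    omega
  rw [hcast]
  congr 1
  ring

variable [TopologicalSpace G] [IsTopologicalAddGroup G] [T2Space G]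

theorem tsum_sub_neg_step_two_eq_max (a : ℤ → G) (m : ℤ)
    (h : Summable fun l : ℕ => a (m + 2 * l) - a (-(m + 2 * l))) :
    ∑' l : ℕ, (a (m + 2 * l) - a (-(m + 2 * l))) =
      ∑' j : ℕ, (a (max m (2 - m) + 2 * j) - a (-(max m (2 - m) + 2 * j))) := by
  rcases le_total 1 m with hm | hm
  · rw [max_eq_left (by omega)]
  obtain ⟨k, rfl⟩ : ∃ k : ℕ, m = 1 - k := ⟨(1 - m).toNat, by omega⟩
  rw [← h.sum_add_tsum_nat_add k, sum_range_sub_neg_eq_zero, zero_add, max_eq_right (by omega)]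
  refine tsum_congr fun j => ?_
  push_cast
  ring_nf

end OddPart

section DivisionRing

variable {K : Type*} [DivisionRing K]

def singletTerm (u : K) (r : ℤ) : K :=
  u ^ ((3 * r - 1) ^ 2) - u ^ ((3 * r + 1) ^ 2)

theorem singletTerm_eq_sub_neg (u : K) (r : ℤ) :
    singletTerm u r = u ^ ((3 * r - 1) ^ 2) - u ^ ((3 * -r - 1) ^ 2) := by
  rw [singletTerm, show (3 * -r - 1) ^ 2 = (3 * r + 1) ^ 2 by ring]

theorem zpow_sub_zpow_eq_mul_singletTerm {u : K} (hu : u ≠ 0) (s m l : ℤ) :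
    u ^ (4 * (3 * l + s + 1) * (3 * m + 3 * l - s - 2))
        - u ^ (4 * (3 * l + s + 2) * (3 * m + 3 * l - s - 1))
      = u ^ (-(3 * m - 2 * s - 3) ^ 2) * singletTerm u (m + 2 * l) := by
  rw [singletTerm, mul_sub (u ^ _), ← zpow_add₀ hu, ← zpow_add₀ hu]
  congr 2 <;> ring

theorem tsum_singletTerm_step_two_eq_max [TopologicalSpace K] [IsTopologicalAddGroup K]
    [T2Space K] (u : K) (m : ℤ) (h : Summable fun l : ℕ => singletTerm u (m + 2 * l)) :
    ∑' l : ℕ, singletTerm u (m + 2 * l) = ∑' j : ℕ, singletTerm u (max m (2 - m) + 2 * j) := by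
  simp only [singletTerm_eq_sub_neg] at h ⊢
  exact tsum_sub_neg_step_two_eq_max (fun r => u ^ ((3 * r - 1) ^ 2)) m h

end DivisionRing

section NormedDivisionRing

variable {𝕜 : Type*} [NormedDivisionRing 𝕜]

theorem summable_norm_zpow_of_eventually_le {u : 𝕜} (hu0 : 0 < ‖u‖) (hu1 : ‖u‖ < 1)
    {e : ℕ → ℤ} (he : ∀ᶠ n : ℕ in atTop, (n : ℤ) ≤ e n) :
    Summable fun n => ‖u ^ e n‖ := by
  refine .of_norm_bounded_eventually (summable_geometric_of_lt_one hu0.le hu1) ?_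
  rw [Nat.cofinite_eq_atTop]
  filter_upwards [he] with n hn
  rw [norm_norm, norm_zpow, ← zpow_natCast]
  exact zpow_le_zpow_right_of_le_one₀ hu0 hu1.le hn

theorem summable_norm_singletTerm {u : 𝕜} (hu0 : 0 < ‖u‖) (hu1 : ‖u‖ < 1) (r : ℤ) :
    Summable fun j : ℕ => ‖singletTerm u (r + 2 * j)‖ := by
  have hsq : ∀ δ : ℤ, |δ| ≤ 1 → ∀ᶠ j : ℕ in atTop, (j : ℤ) ≤ (3 * (r + 2 * j) + δ) ^ 2 := by
    intro δ hδ
    filter_upwards [eventually_ge_atTop (3 * |r| + 1).toNat] with j hj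
    have hlin : (j : ℤ) ≤ 3 * (r + 2 * j) + δ := by
      have := Int.toNat_le.mp hj
      have := neg_abs_le r
      have := neg_abs_le δ
      omega
    nlinarith
  refine .of_nonneg_of_le (fun _ => norm_nonneg _) (fun j => norm_sub_le _ _) (.add ?_ ?_)
  · exact summable_norm_zpow_of_eventually_le hu0 hu1 (by simpa [sub_eq_add_neg] using hsq (-1) le_rfl)
  · exact summable_norm_zpow_of_eventually_le hu0 hu1 (hsq 1 le_rfl)

end NormedDivisionRing

/-- Coefficient-wise branching identity for `ch L_0^s` of `sl(2)`-hat at level `−4/3`: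
with `R = max(m, 2−m)`,
`Σ_{ℓ≥0} (u^{4(3ℓ+s+1)(3m+3ℓ−s−2)} − u^{4(3ℓ+s+2)(3m+3ℓ−s−1)})
 = u^{−(3m−2s−3)²} · Σ_{j≥0} (u^{(3(R+2j)−1)²} − u^{(3(R+2j)+1)²})`,
all series converging absolutely, for `s, m ∈ ℤ` and `0 < |u| < 1`. -/
theorem stmt_8 (s m : ℤ) (u : ℂ) (hu0 : 0 < ‖u‖) (hu1 : ‖u‖ < 1) :
    Summable (fun l : ℕ =>
        ‖u ^ (4 * (3 * (l : ℤ) + s + 1) * (3 * m + 3 * (l : ℤ) - s - 2))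
          - u ^ (4 * (3 * (l : ℤ) + s + 2) * (3 * m + 3 * (l : ℤ) - s - 1))‖) ∧
    Summable (fun j : ℕ =>
        ‖u ^ ((3 * (max m (2 - m) + 2 * (j : ℤ)) - 1) ^ 2)
          - u ^ ((3 * (max m (2 - m) + 2 * (j : ℤ)) + 1) ^ 2)‖) ∧
    (∑' l : ℕ, (u ^ (4 * (3 * (l : ℤ) + s + 1) * (3 * m + 3 * (l : ℤ) - s - 2))
        - u ^ (4 * (3 * (l : ℤ) + s + 2) * (3 * m + 3 * (l : ℤ) - s - 1))))
      = u ^ (-(3 * m - 2 * s - 3) ^ 2) *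
          ∑' j : ℕ, (u ^ ((3 * (max m (2 - m) + 2 * (j : ℤ)) - 1) ^ 2)
            - u ^ ((3 * (max m (2 - m) + 2 * (j : ℤ)) + 1) ^ 2)) := by
  simp_rw [zpow_sub_zpow_eq_mul_singletTerm (norm_pos_iff.mp hu0), norm_mul, tsum_mul_left]
  refine ⟨(summable_norm_singletTerm hu0 hu1 m).mul_left _,
    summable_norm_singletTerm hu0 hu1 _, ?_⟩
  rw [tsum_singletTerm_step_two_eq_max u m (summable_norm_singletTerm hu0 hu1 m).of_norm]
  rfl
end

section
/- Let s and m be integers, set R = max(m, 2−m), and let u be a complex number with 0 < |u| < 1. Then Σ_{ℓ=0}^∞ ( u^{4(3ℓ+s+1)(3m+3ℓ−s−3)} − u^{4(3ℓ+s+3)(3m+3ℓ−s−1)} ) = u^{−(3m−2s−4)²} · Σ_{j=0}^∞ ( u^{(3(R+2j)−2)²} − u^{(3(R+2j)+2)²} ), all series converging absolutely. -/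
/-!
Both sides are differences of half theta series `θ c = Σ_{k ≥ 0} u ^ (c + 6k)²`: completing the
square, the left side is `u ^ (-(3m-2s-4)²) (θ (3m-2) - θ (3m+2))` and the right side is the same
expression with `m` replaced by `R`. When `R = 2 - m` the two agree because the full theta series
`Σ_{k ∈ ℤ} u ^ (c + 6k)² = θ c + θ (6 - c)` only depends on `±c mod 6`, and `3m - 2 ≡ -(3m + 2)`.
-/

open Filter

lemma le_sq_add_mul {c n k : ℤ} (hn : n ≠ 0) (hk : 2 * |c| + 1 ≤ k) : k ≤ (c + n * k) ^ 2 := by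
  have hn1 : 1 ≤ |n| := Int.one_le_abs hn
  have hk0 : 0 ≤ k := by linarith [abs_nonneg c]
  -- `|c + n k| ≥ |n| k - |c| ≥ k - |c| ≥ (k + 1) / 2`, and `(k + 1)² ≥ 4k`
  have hlow : k - |c| ≤ |c + n * k| := by
    have := abs_sub_abs_le_abs_sub (n * k) (-c)
    rw [abs_mul, abs_of_nonneg hk0, abs_neg, sub_neg_eq_add, add_comm] at this
    nlinarith
  rw [← sq_abs]
  nlinarith [sq_nonneg (k - 1)]

section HalfTheta

variable {𝕜 : Type*} [NormedField 𝕜] {u : 𝕜}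

lemma summable_norm_zpow_of_le_s9 (hu0 : 0 < ‖u‖) (hu1 : ‖u‖ < 1) {e : ℕ → ℤ}
    (he : ∀ᶠ k : ℕ in atTop, (k : ℤ) ≤ e k) : Summable (fun k : ℕ => ‖u ^ e k‖) := by
  refine Summable.of_norm_bounded_eventually_nat (summable_geometric_of_lt_one hu0.le hu1) ?_
  filter_upwards [he] with k hk
  rw [norm_norm, norm_zpow, ← zpow_natCast]
  exact zpow_le_zpow_right_of_le_one₀ hu0 hu1.le hk

lemma summable_norm_zpow_sq_add_mul (hu0 : 0 < ‖u‖) (hu1 : ‖u‖ < 1) (c : ℤ) {n : ℤ}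
    (hn : n ≠ 0) : Summable (fun k : ℕ => ‖u ^ ((c + n * k) ^ 2)‖) := by
  refine summable_norm_zpow_of_le_s9 hu0 hu1 ?_
  filter_upwards [eventually_ge_atTop (2 * c.natAbs + 1)] with k hk
  exact le_sq_add_mul hn (by rw [Int.abs_eq_natAbs]; exact_mod_cast hk)

noncomputable def halfTheta (u : 𝕜) (n c : ℤ) : 𝕜 := ∑' k : ℕ, u ^ ((c + n * k) ^ 2)

noncomputable def theta (u : 𝕜) (n c : ℤ) : 𝕜 := ∑' k : ℤ, u ^ ((c + n * k) ^ 2)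

lemma theta_add_mul (n c t : ℤ) : theta u n (c + n * t) = theta u n c := by
  rw [theta, theta, ← (Equiv.addLeft t).tsum_eq (fun k : ℤ => u ^ ((c + n * k) ^ 2))]
  refine tsum_congr fun k => ?_
  simp only [Equiv.coe_addLeft]
  congr 1
  ring

lemma theta_neg (n c : ℤ) : theta u n (-c) = theta u n c := by
  rw [theta, theta, ← (Equiv.neg ℤ).tsum_eq (fun k : ℤ => u ^ ((c + n * k) ^ 2))]
  refine tsum_congr fun k => ?_
  simp only [Equiv.neg_apply]
  congr 1
  ring

lemma summable_norm_zpow_sub_zpow (hu0 : 0 < ‖u‖) (hu1 : ‖u‖ < 1) (a b : ℤ) {n : ℤ}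
    (hn : n ≠ 0) : Summable (fun k : ℕ => ‖u ^ ((a + n * k) ^ 2) - u ^ ((b + n * k) ^ 2)‖) :=
  .of_nonneg_of_le (fun _ => norm_nonneg _) (fun _ => norm_sub_le _ _)
    ((summable_norm_zpow_sq_add_mul hu0 hu1 a hn).add (summable_norm_zpow_sq_add_mul hu0 hu1 b hn))

variable [CompleteSpace 𝕜]

lemma hasSum_halfTheta (hu0 : 0 < ‖u‖) (hu1 : ‖u‖ < 1) (c : ℤ) {n : ℤ} (hn : n ≠ 0) :
    HasSum (fun k : ℕ => u ^ ((c + n * k) ^ 2)) (halfTheta u n c) :=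
  (summable_norm_zpow_sq_add_mul hu0 hu1 c hn).of_norm.hasSum

lemma theta_eq_halfTheta_add_halfTheta (hu0 : 0 < ‖u‖) (hu1 : ‖u‖ < 1) (c : ℤ) {n : ℤ}
    (hn : n ≠ 0) : theta u n c = halfTheta u n c + halfTheta u n (n - c) := by
  have hneg : HasSum (fun k : ℕ => u ^ ((c + n * (-(k + 1 : ℤ))) ^ 2)) (halfTheta u n (n - c)) := by
    refine (hasSum_halfTheta hu0 hu1 (n - c) hn).congr_fun fun k => ?_
    congr 1
    ring
  exact (HasSum.of_nat_of_neg_add_one (f := fun k : ℤ => u ^ ((c + n * k) ^ 2))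
    (hasSum_halfTheta hu0 hu1 c hn) hneg).tsum_eq

-- `theta u n a = theta u n b`, split into its two halves.
lemma halfTheta_sub_halfTheta_of_dvd_add (hu0 : 0 < ‖u‖) (hu1 : ‖u‖ < 1) {n a b : ℤ}
    (hn : n ≠ 0) (hab : n ∣ a + b) :
    halfTheta u n a - halfTheta u n b = halfTheta u n (n - b) - halfTheta u n (n - a) := by
  obtain ⟨t, ht⟩ := hab
  have htheta : theta u n a = theta u n b := by
    rw [show a = -b + n * t by linarith, theta_add_mul, theta_neg]
  rw [theta_eq_halfTheta_add_halfTheta hu0 hu1 a hn,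
    theta_eq_halfTheta_add_halfTheta hu0 hu1 b hn] at htheta
  linear_combination htheta

lemma tsum_zpow_sub_zpow (hu0 : 0 < ‖u‖) (hu1 : ‖u‖ < 1) (a b : ℤ) {n : ℤ} (hn : n ≠ 0) :
    ∑' k : ℕ, (u ^ ((a + n * k) ^ 2) - u ^ ((b + n * k) ^ 2))
      = halfTheta u n a - halfTheta u n b :=
  ((hasSum_halfTheta hu0 hu1 a hn).sub (hasSum_halfTheta hu0 hu1 b hn)).tsum_eq

end HalfTheta

/-- Coefficient-wise branching identity for `ch L_{−2/3}^s` of `sl(2)`-hat at level `−4/3`: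
with `R = max(m, 2−m)`,
`Σ_{ℓ≥0} (u^{4(3ℓ+s+1)(3m+3ℓ−s−3)} − u^{4(3ℓ+s+3)(3m+3ℓ−s−1)})
 = u^{−(3m−2s−4)²} · Σ_{j≥0} (u^{(3(R+2j)−2)²} − u^{(3(R+2j)+2)²})`,
all series converging absolutely, for `s, m ∈ ℤ` and `0 < |u| < 1`. -/
theorem stmt_9 (s m : ℤ) (u : ℂ) (hu0 : 0 < ‖u‖) (hu1 : ‖u‖ < 1) :
    Summable (fun l : ℕ =>
        ‖u ^ (4 * (3 * (l : ℤ) + s + 1) * (3 * m + 3 * (l : ℤ) - s - 3))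
          - u ^ (4 * (3 * (l : ℤ) + s + 3) * (3 * m + 3 * (l : ℤ) - s - 1))‖) ∧
    Summable (fun j : ℕ =>
        ‖u ^ ((3 * (max m (2 - m) + 2 * (j : ℤ)) - 2) ^ 2)
          - u ^ ((3 * (max m (2 - m) + 2 * (j : ℤ)) + 2) ^ 2)‖) ∧
    (∑' l : ℕ, (u ^ (4 * (3 * (l : ℤ) + s + 1) * (3 * m + 3 * (l : ℤ) - s - 3))
        - u ^ (4 * (3 * (l : ℤ) + s + 3) * (3 * m + 3 * (l : ℤ) - s - 1))))
      = u ^ (-(3 * m - 2 * s - 4) ^ 2) *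
          ∑' j : ℕ, (u ^ ((3 * (max m (2 - m) + 2 * (j : ℤ)) - 2) ^ 2)
            - u ^ ((3 * (max m (2 - m) + 2 * (j : ℤ)) + 2) ^ 2)) := by
  have hu : u ≠ 0 := norm_pos_iff.mp hu0
  have h6 : (6 : ℤ) ≠ 0 := by norm_num
  set R := max m (2 - m)
  have hlhs : ∀ l : ℕ,
      u ^ (4 * (3 * (l : ℤ) + s + 1) * (3 * m + 3 * (l : ℤ) - s - 3))
        - u ^ (4 * (3 * (l : ℤ) + s + 3) * (3 * m + 3 * (l : ℤ) - s - 1))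
      = u ^ (-(3 * m - 2 * s - 4) ^ 2) *
          (u ^ ((3 * m - 2 + 6 * l) ^ 2) - u ^ ((3 * m + 2 + 6 * l) ^ 2)) := by
    intro l
    rw [mul_sub (u ^ _), ← zpow_add₀ hu, ← zpow_add₀ hu]
    congr 2 <;> ring
  have hrhs : ∀ j : ℕ,
      u ^ ((3 * (R + 2 * (j : ℤ)) - 2) ^ 2) - u ^ ((3 * (R + 2 * (j : ℤ)) + 2) ^ 2)
        = u ^ ((3 * R - 2 + 6 * j) ^ 2) - u ^ ((3 * R + 2 + 6 * j) ^ 2) := by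
    intro j
    congr 2 <;> ring
  have hR : halfTheta u 6 (3 * R - 2) - halfTheta u 6 (3 * R + 2)
      = halfTheta u 6 (3 * m - 2) - halfTheta u 6 (3 * m + 2) := by
    rcases max_choice m (2 - m) with hm | hm
    · rw [show R = m from hm]
    · rw [show R = 2 - m from hm, halfTheta_sub_halfTheta_of_dvd_add hu0 hu1 h6 ⟨2 - m, by ring⟩]
      ring_nf
  simp only [hlhs, hrhs, norm_mul]
  refine ⟨(summable_norm_zpow_sub_zpow hu0 hu1 _ _ h6).mul_left _,
    summable_norm_zpow_sub_zpow hu0 hu1 _ _ h6, ?_⟩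
  rw [tsum_mul_left, tsum_zpow_sub_zpow hu0 hu1 _ _ h6, tsum_zpow_sub_zpow hu0 hu1 _ _ h6, hR]
end
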